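/- Let M be a real symmetric positive definite n×n matrix, A (n×n), B (n×m), K (m×n), D (n×r), P (n×n̂), B̂ (n̂×m̂), R (m×m̂) real matrices, and ε > 0, κ > 0 with (1 + 1/ε + ε)(A + B K)ᵀ M (A + B K) ⪯ κ M (Loewner order). Then for all e ∈ ℝⁿ, δ ∈ ℝ^{r}, û ∈ ℝ^{m̂}: ((A+BK)e + Dδ + (BR − PB̂)û)ᵀ M ((A+BK)e + Dδ + (BR − PB̂)û) ≤ κ eᵀ M e + (1 + ε + 1/ε)(‖M^{1/2} D δ‖² + ‖M^{1/2}(BR − PB̂) û‖²), where ‖·‖ is the Euclidean norm and M^{1/2} the positive semidefinite square root of M. -/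

import Mathlib

/-!
Writing the quadratic form of `M` as `vᵀ M v = ‖M^{1/2} v‖²`, the next-step error becomes the
squared norm of a sum of three vectors, which is at most `3` times the sum of their squared norms,
and `3 ≤ 1 + ε + 1/ε`. The term coming from `(A + B K) e` is `eᵀ (A + B K)ᵀ M (A + B K) e`, and the Loewner
hypothesis absorbs it, with its factor `1 + ε + 1/ε`, into `κ eᵀ M e`.
-/

open Matrix
open scoped MatrixOrder

/-- The Euclidean norm of a vector in `ℝⁿ`. -/
noncomputable def euclNorm {n : ℕ} (v : Fin n → ℝ) : ℝ :=
  ‖(WithLp.equiv 2 (Fin n → ℝ)).symm v‖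

lemma three_le_one_add_add_one_div {ε : ℝ} (hε : 0 < ε) : 3 ≤ 1 + ε + 1 / ε := by
  have : 2 ≤ ε + 1 / ε := by
    rw [← sub_nonneg, show ε + 1 / ε - 2 = (ε - 1) ^ 2 / ε by field_simp; ring]
    positivity
  linarith

lemma norm_add₃_sq_le {E : Type*} [SeminormedAddGroup E] (a b c : E) :
    ‖a + b + c‖ ^ 2 ≤ 3 * (‖a‖ ^ 2 + ‖b‖ ^ 2 + ‖c‖ ^ 2) := by
  nlinarith [norm_add₃_le (a := a) (b := b) (c := c), norm_nonneg (a + b + c),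
    sq_nonneg (‖a‖ - ‖b‖), sq_nonneg (‖a‖ - ‖c‖), sq_nonneg (‖b‖ - ‖c‖)]

lemma euclNorm_add₃_sq_le {n : ℕ} (a b c : Fin n → ℝ) :
    euclNorm (a + b + c) ^ 2 ≤ 3 * (euclNorm a ^ 2 + euclNorm b ^ 2 + euclNorm c ^ 2) := by
  simpa only [euclNorm, WithLp.equiv_symm_apply, WithLp.toLp_add] using
    norm_add₃_sq_le (WithLp.toLp 2 a) (WithLp.toLp 2 b) (WithLp.toLp 2 c)

lemma euclNorm_sq {n : ℕ} (v : Fin n → ℝ) : euclNorm v ^ 2 = v ⬝ᵥ v := by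
  rw [euclNorm, EuclideanSpace.norm_eq, Real.sq_sqrt (by positivity)]
  simp [dotProduct, sq]

lemma Matrix.dotProduct_transpose_mul_mul_mulVec {ι κ R : Type*} [Fintype ι] [Fintype κ]
    [CommSemiring R] (M : Matrix ι ι R) (A : Matrix ι κ R) (v : κ → R) :
    v ⬝ᵥ (Aᵀ * M * A) *ᵥ v = A *ᵥ v ⬝ᵥ M *ᵥ (A *ᵥ v) := by
  rw [Matrix.mul_assoc, ← mulVec_mulVec, dotProduct_mulVec, vecMul_transpose, ← mulVec_mulVec]

lemma Matrix.dotProduct_mulVec_eq_sqrt_mulVec_dotProduct {ι : Type*} [Fintype ι] [DecidableEq ι]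
    {M : Matrix ι ι ℝ} (hM : 0 ≤ M) (v : ι → ℝ) :
    v ⬝ᵥ M *ᵥ v = CFC.sqrt M *ᵥ v ⬝ᵥ CFC.sqrt M *ᵥ v := by
  have hsymm : (CFC.sqrt M)ᵀ = CFC.sqrt M :=
    (Matrix.nonneg_iff_posSemidef.mp (CFC.sqrt_nonneg M)).1
  conv_lhs => rw [← CFC.sqrt_mul_sqrt_self M hM, ← mulVec_mulVec, dotProduct_mulVec, ← hsymm,
    vecMul_transpose, hsymm]

lemma Matrix.PosSemidef.dotProduct_mulVec_le {ι : Type*} [Fintype ι]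
    {M N : Matrix ι ι ℝ} (h : (M - N).PosSemidef) (v : ι → ℝ) :
    v ⬝ᵥ N *ᵥ v ≤ v ⬝ᵥ M *ᵥ v := by
  have := h.dotProduct_mulVec_nonneg v
  rw [star_trivial, sub_mulVec, dotProduct_sub] at this
  linarith

theorem single_mode_decrease_general {n m nh mh r : ℕ}
    (M : Matrix (Fin n) (Fin n) ℝ) (hM : M.PosDef)
    (A : Matrix (Fin n) (Fin n) ℝ) (B : Matrix (Fin n) (Fin m) ℝ)
    (K : Matrix (Fin m) (Fin n) ℝ) (D : Matrix (Fin n) (Fin r) ℝ)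
    (P : Matrix (Fin n) (Fin nh) ℝ) (Bh : Matrix (Fin nh) (Fin mh) ℝ)
    (R : Matrix (Fin m) (Fin mh) ℝ)
    (ε κ : ℝ) (hε : 0 < ε)
    (hLoewner :
      (κ • M - (1 + 1 / ε + ε) • ((A + B * K)ᵀ * M * (A + B * K))).PosSemidef) :
    ∀ (e : Fin n → ℝ) (δ : Fin r → ℝ) (uh : Fin mh → ℝ),
      ((A + B * K).mulVec e + D.mulVec δ + (B * R - P * Bh).mulVec uh) ⬝ᵥ
          M.mulVec
            ((A + B * K).mulVec e + D.mulVec δ + (B * R - P * Bh).mulVec uh) ≤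
        κ * (e ⬝ᵥ M.mulVec e) +
          (1 + ε + 1 / ε) *
            (euclNorm ((CFC.sqrt M * D).mulVec δ) ^ 2 +
              euclNorm ((CFC.sqrt M * (B * R - P * Bh)).mulVec uh) ^ 2) := by
  intro e δ uh
  set T := CFC.sqrt M
  have hquad (v : Fin n → ℝ) : v ⬝ᵥ M *ᵥ v = euclNorm (T *ᵥ v) ^ 2 := by
    rw [euclNorm_sq, dotProduct_mulVec_eq_sqrt_mulVec_dotProduct hM.posSemidef.nonneg]
  have hdecay : (1 + ε + 1 / ε) * euclNorm (T *ᵥ (A + B * K) *ᵥ e) ^ 2 ≤ κ * (e ⬝ᵥ M *ᵥ e) := by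
    have := hLoewner.dotProduct_mulVec_le e
    rw [smul_mulVec, smul_mulVec, dotProduct_smul, dotProduct_smul,
      dotProduct_transpose_mul_mul_mulVec, hquad, smul_eq_mul, smul_eq_mul] at this
    linarith
  have hgain := three_le_one_add_add_one_div hε
  rw [hquad]
  simp only [mulVec_add, ← mulVec_mulVec]
  calc _ ≤ 3 * (euclNorm (T *ᵥ (A + B * K) *ᵥ e) ^ 2 + euclNorm (T *ᵥ D *ᵥ δ) ^ 2
          + euclNorm (T *ᵥ (B * R - P * Bh) *ᵥ uh) ^ 2) := euclNorm_add₃_sq_le _ _ _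
    _ ≤ (1 + ε + 1 / ε) * (euclNorm (T *ᵥ (A + B * K) *ᵥ e) ^ 2 + euclNorm (T *ᵥ D *ᵥ δ) ^ 2
          + euclNorm (T *ᵥ (B * R - P * Bh) *ᵥ uh) ^ 2) := by gcongr
    _ ≤ _ := by linarith

/-- Single-mode decrease estimate in the linear construction: if
`(1 + 1/ε + ε)(A + B K)ᵀ M (A + B K) ⪯ κ M` (Loewner order), then the quadratic
form (w.r.t. `M`) of the next-step error `(A+BK) e + D δ + (B R - P B̂) û` is
bounded by `κ` times the current quadratic form plus gain terms in `δ` and `û`,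
where `M^{1/2}` denotes the positive semidefinite square root of `M`. -/
theorem single_mode_decrease {n m nh mh r : ℕ}
    (M : Matrix (Fin n) (Fin n) ℝ) (hM : M.PosDef)
    (A : Matrix (Fin n) (Fin n) ℝ) (B : Matrix (Fin n) (Fin m) ℝ)
    (K : Matrix (Fin m) (Fin n) ℝ) (D : Matrix (Fin n) (Fin r) ℝ)
    (P : Matrix (Fin n) (Fin nh) ℝ) (Bh : Matrix (Fin nh) (Fin mh) ℝ)
    (R : Matrix (Fin m) (Fin mh) ℝ)
    (ε κ : ℝ) (hε : 0 < ε) (hκ : 0 < κ)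
    (hLoewner :
      (κ • M - (1 + 1 / ε + ε) • ((A + B * K)ᵀ * M * (A + B * K))).PosSemidef) :
    ∀ (e : Fin n → ℝ) (δ : Fin r → ℝ) (uh : Fin mh → ℝ),
      ((A + B * K).mulVec e + D.mulVec δ + (B * R - P * Bh).mulVec uh) ⬝ᵥ
          M.mulVec
            ((A + B * K).mulVec e + D.mulVec δ + (B * R - P * Bh).mulVec uh) ≤
        κ * (e ⬝ᵥ M.mulVec e) +
          (1 + ε + 1 / ε) *
            (euclNorm ((CFC.sqrt M * D).mulVec δ) ^ 2 +
              euclNorm ((CFC.sqrt M * (B * R - P * Bh)).mulVec uh) ^ 2) :=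
  single_mode_decrease_general M hM A B K D P Bh R ε κ hε hLoewner
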